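/- arXiv:1603.07735 — 2 statements merged into one kernel-verified Lean document; each statement's English description precedes it below -/
import Mathlib

section
/- Let P ⊆ ℝⁿ be a polytope in standard form. A point x ∈ P is a vertex of P if and only if x is the unique point of P with support equal to supp(x). -/
/-!
In standard form the only constraints that can be tight at `x` are the coordinates vanishing at
`x`. Hence moving from `x` along a direction `d` of the affine hull that vanishes wherever `x` does
stays in `P` and keeps the support, for all small `|t|`. If `supp y = supp x`, the direction
`x - y` is of this kind, so `x` is the midpoint of two points of `P` unless `y = x`. Conversely, if
`x` lies in an open segment `]y, z[` of `P`, the direction `z - y` is of this kind, and perturbing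
along it yields a second point of `P` with support `supp x` unless `y = z`.
-/

/-- The support of a non-negative vector, as a 0/1 vector. -/
noncomputable def supp {n : ℕ} (v : Fin n → ℝ) : Fin n → ℝ := fun i => if 0 < v i then 1 else 0

/-- A set is in standard form if it equals the intersection of the non-negative
orthant with its affine hull. -/
def StdForm {n : ℕ} (P : Set (Fin n → ℝ)) : Prop :=
  P = {x | ∀ i, 0 ≤ x i} ∩ (affineSpan ℝ P : Set (Fin n → ℝ))

/-- `F` is a face of `P`: the zero set in `P` of a valid linear inequality. -/
def IsFace {n : ℕ} (P F : Set (Fin n → ℝ)) : Prop :=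
  ∃ (a : Fin n → ℝ) (b : ℝ), (∀ x ∈ P, b ≤ ∑ i, a i * x i) ∧
    F = {x ∈ P | ∑ i, a i * x i = b}

open Filter Topology

lemma exists_ne_zero_and_neg_of_eventually_nhds_zero {p : ℝ → Prop} (h : ∀ᶠ t in 𝓝 0, p t) :
    ∃ t ≠ 0, p t ∧ p (-t) := by
  have h' : ∀ᶠ t in 𝓝[≠] (0 : ℝ), p t ∧ p (-t) :=
    nhdsWithin_le_nhds (h.and ((continuous_neg.tendsto' 0 0 neg_zero).eventually h))
  exact (h'.and self_mem_nhdsWithin).exists.imp fun t ht => ⟨ht.2, ht.1⟩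

lemma eventually_nhds_zero_forall_pos_add_mul {ι : Type*} [Finite ι] (x d : ι → ℝ) :
    ∀ᶠ t in 𝓝 (0 : ℝ), ∀ i, 0 < x i → 0 < x i + t * d i := by
  refine eventually_all.2 fun i => ?_
  by_cases hxi : 0 < x i
  · have hlim : Tendsto (fun t : ℝ => x i + t * d i) (𝓝 0) (𝓝 (x i)) :=
      (by fun_prop : Continuous fun t : ℝ => x i + t * d i).tendsto' 0 _ (by simp)
    exact (hlim.eventually (lt_mem_nhds hxi)).mono fun _ h _ => h
  · exact Eventually.of_forall fun _ h => absurd h hxi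

lemma eq_zero_of_mem_openSegment_of_nonneg {ι : Type*} {x y z : ι → ℝ} {i : ι}
    (hseg : x ∈ openSegment ℝ y z) (hy : 0 ≤ y i) (hz : 0 ≤ z i) (hx : x i = 0) :
    y i = 0 ∧ z i = 0 := by
  obtain ⟨a, b, ha, hb, -, rfl⟩ := hseg
  have h := (add_eq_zero_iff_of_nonneg (mul_nonneg ha.le hy) (mul_nonneg hb.le hz)).1 hx
  exact ⟨(mul_eq_zero.1 h.1).resolve_left ha.ne', (mul_eq_zero.1 h.2).resolve_left hb.ne'⟩

section StdForm

variable {n : ℕ} {P : Set (Fin n → ℝ)}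

lemma supp_eq_supp_iff {v w : Fin n → ℝ} : supp v = supp w ↔ ∀ i, (0 < v i ↔ 0 < w i) := by
  simp only [funext_iff, supp]
  refine forall_congr' fun i => ?_
  by_cases hv : 0 < v i <;> by_cases hw : 0 < w i <;> simp [hv, hw]

lemma StdForm.nonneg (hStd : StdForm P) {v : Fin n → ℝ} (hv : v ∈ P) (i : Fin n) : 0 ≤ v i := by
  rw [hStd] at hv
  exact hv.1 i

lemma StdForm.mem_of_nonneg (hStd : StdForm P) {v : Fin n → ℝ} (hv : ∀ i, 0 ≤ v i)
    (hspan : v ∈ affineSpan ℝ P) : v ∈ P := by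
  rw [hStd]
  exact ⟨hv, hspan⟩

lemma StdForm.eventually_add_smul_mem_and_supp_eq (hStd : StdForm P) {x d : Fin n → ℝ}
    (hx : x ∈ P) (hd : d ∈ (affineSpan ℝ P).direction) (hzero : ∀ i, x i = 0 → d i = 0) :
    ∀ᶠ t in 𝓝 (0 : ℝ), x + t • d ∈ P ∧ supp (x + t • d) = supp x := by
  filter_upwards [eventually_nhds_zero_forall_pos_add_mul x d] with t ht
  have hcoord : ∀ i, 0 < x i ∧ 0 < (x + t • d) i ∨ x i = 0 ∧ (x + t • d) i = 0 := fun i =>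
    (hStd.nonneg hx i).lt_or_eq.imp (fun h => ⟨h, ht i h⟩)
      (fun h => ⟨h.symm, by simp [← h, hzero i h.symm]⟩)
  have hspan : x + t • d ∈ affineSpan ℝ P := by
    rw [add_comm]
    exact AffineSubspace.vadd_mem_of_mem_direction (Submodule.smul_mem _ t hd)
      (subset_affineSpan ℝ P hx)
  refine ⟨hStd.mem_of_nonneg (fun i => ?_) hspan, supp_eq_supp_iff.2 fun i => ?_⟩
  · rcases hcoord i with ⟨-, h⟩ | ⟨-, h⟩
    exacts [h.le, h.ge]
  · rcases hcoord i with ⟨h, h'⟩ | ⟨h, h'⟩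
    exacts [iff_of_true h' h, by simp [h, h']]

lemma StdForm.eq_of_mem_extremePoints_of_supp_eq (hStd : StdForm P) {x y : Fin n → ℝ}
    (hext : x ∈ Set.extremePoints ℝ P) (hy : y ∈ P) (hsupp : supp y = supp x) : y = x := by
  have hx := hext.1
  have hzero : ∀ i, x i = 0 → (x - y) i = 0 := fun i hxi => by
    have hyi : ¬ 0 < y i := fun h => (supp_eq_supp_iff.1 hsupp i).1 h |>.ne' hxi
    simp [hxi, le_antisymm (not_lt.1 hyi) (hStd.nonneg hy i)]
  have hdir : x - y ∈ (affineSpan ℝ P).direction :=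
    AffineSubspace.vsub_mem_direction (subset_affineSpan ℝ P hx) (subset_affineSpan ℝ P hy)
  obtain ⟨t, ht, ⟨hplus, -⟩, ⟨hminus, -⟩⟩ := exists_ne_zero_and_neg_of_eventually_nhds_zero
    (hStd.eventually_add_smul_mem_and_supp_eq hx hdir hzero)
  have hmid : x ∈ openSegment ℝ (x + t • (x - y)) (x + (-t) • (x - y)) :=
    ⟨1 / 2, 1 / 2, by norm_num, by norm_num, by norm_num, by module⟩
  have h := hext.2 hplus hminus hmid
  rw [add_eq_left, smul_eq_zero, sub_eq_zero] at h
  exact (h.resolve_left ht).symm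

lemma StdForm.mem_extremePoints_of_forall_supp_eq (hStd : StdForm P) {x : Fin n → ℝ}
    (hx : x ∈ P) (huniq : ∀ y ∈ P, supp y = supp x → y = x) : x ∈ Set.extremePoints ℝ P := by
  refine ⟨hx, fun y hy z hz hseg => ?_⟩
  have hzero : ∀ i, x i = 0 → (z - y) i = 0 := fun i hxi => by
    obtain ⟨hyi, hzi⟩ :=
      eq_zero_of_mem_openSegment_of_nonneg hseg (hStd.nonneg hy i) (hStd.nonneg hz i) hxi
    simp [hyi, hzi]
  have hdir : z - y ∈ (affineSpan ℝ P).direction :=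
    AffineSubspace.vsub_mem_direction (subset_affineSpan ℝ P hz) (subset_affineSpan ℝ P hy)
  obtain ⟨t, ht, hmem, -⟩ := exists_ne_zero_and_neg_of_eventually_nhds_zero
    (hStd.eventually_add_smul_mem_and_supp_eq hx hdir hzero)
  have h := huniq _ hmem.1 hmem.2
  rw [add_eq_left, smul_eq_zero, sub_eq_zero] at h
  obtain rfl := h.resolve_left ht
  rw [openSegment_same, Set.mem_singleton_iff] at hseg
  exact hseg.symm

end StdForm

theorem stmt12_general {n : ℕ} (P : Set (Fin n → ℝ))
    (hStd : StdForm P) (x : Fin n → ℝ) (hx : x ∈ P) :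
    x ∈ Set.extremePoints ℝ P ↔ ∀ y ∈ P, supp y = supp x → y = x :=
  ⟨fun hext _ hy hsupp => hStd.eq_of_mem_extremePoints_of_supp_eq hext hy hsupp,
    hStd.mem_extremePoints_of_forall_supp_eq hx⟩

theorem stmt12 {n : ℕ} (P : Set (Fin n → ℝ)) (hComp : IsCompact P) (hConv : Convex ℝ P)
    (hStd : StdForm P) (x : Fin n → ℝ) (hx : x ∈ P) :
    x ∈ Set.extremePoints ℝ P ↔ ∀ y ∈ P, supp y = supp x → y = x :=
  stmt12_general P hStd x hx
end

section
/- Let P ⊆ ℝⁿ be a polytope in standard form. The points of the relative interior of P are exactly the points of P with maximal support, i.e. those x ∈ P such that supp(y) ≤ supp(x) for all y ∈ P. -/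
open Filter Set Topology

section IntrinsicInterior

variable {𝕜 V P : Type*} [Ring 𝕜] [AddCommGroup V] [Module 𝕜 V] [TopologicalSpace P]
  [AddTorsor V P] {s : Set P} {x : P}

theorem mem_intrinsicInterior_iff_eventually :
    x ∈ intrinsicInterior 𝕜 s ↔
      x ∈ affineSpan 𝕜 s ∧ ∀ᶠ u in 𝓝[affineSpan 𝕜 s] x, u ∈ s := by
  constructor
  · rintro ⟨y, hy, rfl⟩
    exact ⟨y.2, (eventually_nhds_subtype_iff _ y (· ∈ s)).mp (mem_interior_iff_mem_nhds.mp hy)⟩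
  · rintro ⟨hx, hs⟩
    exact ⟨⟨x, hx⟩, mem_interior_iff_mem_nhds.mpr
      ((eventually_nhds_subtype_iff _ ⟨x, hx⟩ (· ∈ s)).mpr hs), rfl⟩

end IntrinsicInterior

theorem AffineSubspace.add_smul_sub_mem {k V : Type*} [Ring k] [AddCommGroup V] [Module k V]
    {Q : AffineSubspace k V} {x y z : V} (t : k) (hx : x ∈ Q) (hy : y ∈ Q) (hz : z ∈ Q) :
    z + t • (x - y) ∈ Q := by
  simpa [vsub_eq_sub, vadd_eq_add, add_comm] using Q.smul_vsub_vadd_mem t hx hy hz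

section TopologicalVectorSpace

variable {E : Type*} [AddCommGroup E] [Module ℝ E] [TopologicalSpace E] [IsTopologicalAddGroup E]
  [ContinuousSMul ℝ E] {s : Set E} {x y z w : E}

theorem eventually_add_smul_sub_mem_of_mem_intrinsicInterior
    (hx : x ∈ intrinsicInterior ℝ s) (hy : y ∈ affineSpan ℝ s) :
    ∀ᶠ t in 𝓝 (0 : ℝ), x + t • (x - y) ∈ s := by
  obtain ⟨hxS, hs⟩ := mem_intrinsicInterior_iff_eventually.mp hx
  have hcont : Continuous fun t : ℝ => x + t • (x - y) := by fun_prop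
  refine (tendsto_nhdsWithin_iff.mpr ⟨?_, ?_⟩).eventually hs
  · simpa using hcont.tendsto 0
  · exact Eventually.of_forall fun t => AffineSubspace.add_smul_sub_mem t hxS hy hxS

theorem exists_pos_add_smul_sub_mem_of_mem_intrinsicInterior
    (hx : x ∈ intrinsicInterior ℝ s) (hy : y ∈ affineSpan ℝ s) :
    ∃ t : ℝ, 0 < t ∧ x + t • (x - y) ∈ s :=
  (((eventually_add_smul_sub_mem_of_mem_intrinsicInterior hx hy).filter_mono
    nhdsWithin_le_nhds).and (self_mem_nhdsWithin (s := Ioi 0))).exists.imp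
    fun _ h => ⟨h.2, h.1⟩

theorem Convex.openSegment_subset_intrinsicInterior (hs : Convex ℝ s) (hw : w ∈ s)
    (hz : z ∈ intrinsicInterior ℝ s) : openSegment ℝ w z ⊆ intrinsicInterior ℝ s := by
  rintro x ⟨a, b, ha, hb, hab, rfl⟩
  obtain ⟨hzS, hs'⟩ := mem_intrinsicInterior_iff_eventually.mp hz
  set x := a • w + b • z
  have hxs : x ∈ s := hs hw (intrinsicInterior_subset hz) ha.le hb.le hab
  have hxS : x ∈ affineSpan ℝ s := subset_affineSpan ℝ s hxs
  -- `u` near `x` is `a • w + b • g u`, where `g u` is near `z`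
  set g : E → E := fun u => z + b⁻¹ • (u - x)
  have hgS : ∀ u ∈ affineSpan ℝ s, g u ∈ affineSpan ℝ s := fun u hu =>
    AffineSubspace.add_smul_sub_mem _ hu hxS hzS
  have hg : Tendsto g (𝓝[affineSpan ℝ s] x) (𝓝[affineSpan ℝ s] z) := by
    refine tendsto_nhdsWithin_iff.mpr ⟨?_, eventually_mem_nhdsWithin.mono hgS⟩
    have hcont : Continuous g := show Continuous fun u => z + b⁻¹ • (u - x) by fun_prop
    simpa [g] using (hcont.tendsto x).mono_left nhdsWithin_le_nhds
  have hsplit : ∀ u, u = a • w + b • g u := fun u => by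
    simp only [g, smul_add, smul_smul, mul_inv_cancel₀ hb.ne', one_smul, x]
    abel
  refine mem_intrinsicInterior_iff_eventually.mpr ⟨hxS, (hg.eventually hs').mono fun u hu => ?_⟩
  rw [hsplit u]
  exact hs hw hu ha.le hb.le hab

end TopologicalVectorSpace

theorem supp_le_supp_iff {n : ℕ} {x y : Fin n → ℝ} :
    supp y ≤ supp x ↔ ∀ i, 0 < y i → 0 < x i := by
  refine forall_congr' fun i => ?_
  by_cases hy : 0 < y i <;> by_cases hx : 0 < x i <;> simp [supp, hx, hy]

theorem exists_pos_nonneg_add_smul_sub {ι : Type*} [Finite ι] {x z : ι → ℝ} (hx : 0 ≤ x)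
    (hzx : ∀ i, x i = 0 → z i = 0) : ∃ t : ℝ, 0 < t ∧ 0 ≤ x + t • (x - z) := by
  have hev : ∀ᶠ t in 𝓝 (0 : ℝ), ∀ i, 0 ≤ x i + t * (x i - z i) := by
    refine eventually_all.mpr fun i => ?_
    rcases (hx i).eq_or_lt with hxi | hxi
    · exact Eventually.of_forall fun t => by simp [← hxi, hzx i hxi.symm]
    · have hcont : Continuous fun t : ℝ => x i + t * (x i - z i) := by fun_prop
      exact (hcont.tendsto' 0 (x i) (by simp)).eventually (eventually_ge_nhds hxi)
  obtain ⟨t, hnonneg, ht⟩ :=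
    ((hev.filter_mono nhdsWithin_le_nhds).and (self_mem_nhdsWithin (s := Ioi 0))).exists
  exact ⟨t, ht, fun i => hnonneg i⟩

namespace StdForm

variable {n : ℕ} {P : Set (Fin n → ℝ)} {x y : Fin n → ℝ}

theorem mem_iff (hP : StdForm P) : x ∈ P ↔ 0 ≤ x ∧ x ∈ affineSpan ℝ P := by
  conv_lhs => rw [hP]
  rfl

theorem convex (hP : StdForm P) : Convex ℝ P := by
  rw [hP]
  exact (convex_Ici (0 : Fin n → ℝ)).inter (affineSpan ℝ P).convex

theorem supp_le_of_mem_intrinsicInterior (hP : StdForm P) (hx : x ∈ intrinsicInterior ℝ P)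
    (hy : y ∈ P) : supp y ≤ supp x := by
  refine supp_le_supp_iff.mpr fun i hyi => ?_
  obtain ⟨t, ht, hxt⟩ :=
    exists_pos_add_smul_sub_mem_of_mem_intrinsicInterior hx (subset_affineSpan ℝ P hy)
  have hxi : 0 ≤ x i + t * (x i - y i) := (hP.mem_iff.mp hxt).1 i
  nlinarith [(hP.mem_iff.mp (intrinsicInterior_subset hx)).1 i]

theorem mem_intrinsicInterior_of_supp_le (hP : StdForm P) (hx : x ∈ P)
    (hmax : ∀ y ∈ P, supp y ≤ supp x) : x ∈ intrinsicInterior ℝ P := by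
  obtain ⟨z, hz⟩ := Set.Nonempty.intrinsicInterior hP.convex ⟨x, hx⟩
  have hzP : z ∈ P := intrinsicInterior_subset hz
  obtain ⟨hx0, hxS⟩ := hP.mem_iff.mp hx
  have hzx : ∀ i, x i = 0 → z i = 0 := fun i hxi =>
    (((hP.mem_iff.mp hzP).1 i).eq_of_not_lt fun hzi =>
      (supp_le_supp_iff.mp (hmax z hzP) i hzi).ne' hxi).symm
  obtain ⟨t, ht, hw0⟩ := exists_pos_nonneg_add_smul_sub hx0 hzx
  have hwP : x + t • (x - z) ∈ P := hP.mem_iff.mpr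
    ⟨hw0, AffineSubspace.add_smul_sub_mem t hxS (subset_affineSpan ℝ P hzP) hxS⟩
  refine hP.convex.openSegment_subset_intrinsicInterior hwP hz
    ⟨1 / (1 + t), t / (1 + t), by positivity, by positivity, by field_simp, ?_⟩
  ext i
  simp only [Pi.add_apply, Pi.smul_apply, Pi.sub_apply, smul_eq_mul]
  field_simp
  ring

end StdForm

theorem stmt14_general {n : ℕ} (P : Set (Fin n → ℝ)) (hStd : StdForm P) :
    intrinsicInterior ℝ P = {x ∈ P | ∀ y ∈ P, supp y ≤ supp x} :=
  Set.ext fun _ => ⟨fun hx => ⟨intrinsicInterior_subset hx,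
    fun _ hy => hStd.supp_le_of_mem_intrinsicInterior hx hy⟩,
    fun hx => hStd.mem_intrinsicInterior_of_supp_le hx.1 hx.2⟩

theorem stmt14 {n : ℕ} (P : Set (Fin n → ℝ)) (hComp : IsCompact P) (hConv : Convex ℝ P)
    (hStd : StdForm P) :
    intrinsicInterior ℝ P = {x ∈ P | ∀ y ∈ P, supp y ≤ supp x} :=
  stmt14_general P hStd
end
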